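/- Let f^l, f^r : ℝ → ℝ be continuous, and let G_VV be the set of pairs (u^l,u^r) with f^l(u^l) = f^r(u^r) =: s such that either u^l = u^r; or u^l < u^r and there exists u^o ∈ [u^l,u^r] with f^l(z) ≥ s on [u^l,u^o] and f^r(z) ≥ s on [u^o,u^r]; or u^l > u^r and there exists u^o ∈ [u^r,u^l] with f^r(z) ≤ s on [u^r,u^o] and f^l(z) ≤ s on [u^o,u^l]. Then for every pair (u^l,u^r) with f^l(u^l) = f^r(u^r) and (u^l,u^r) ∉ G_VV, there exists (c^l,c^r) ∈ G^o_VV such that q^l(u^l,c^l) < q^r(u^r,c^r); in particular G_VV contains the dual germ (G^o_VV)*. -/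
import Mathlib


noncomputable section

/-- Kruzhkov entropy flux `q(a,b) = sign(a-b)(f(a)-f(b))`. -/
def qflux (f : ℝ → ℝ) (a b : ℝ) : ℝ := Real.sign (a - b) * (f a - f b)

/-- A germ: a set of pairs in `U × U` satisfying the Rankine–Hugoniot condition. -/
def IsGerm (U : Set ℝ) (fl fr : ℝ → ℝ) (G : Set (ℝ × ℝ)) : Prop :=
  G ⊆ U ×ˢ U ∧ ∀ p ∈ G, fl p.1 = fr p.2

/-- An L1-dissipative germ. -/
def IsL1D (U : Set ℝ) (fl fr : ℝ → ℝ) (G : Set (ℝ × ℝ)) : Prop :=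
  IsGerm U fl fr G ∧ ∀ p ∈ G, ∀ p' ∈ G, qflux fr p.2 p'.2 ≤ qflux fl p.1 p'.1

/-- The dual germ `G*`. -/
def dualGerm (U : Set ℝ) (fl fr : ℝ → ℝ) (G : Set (ℝ × ℝ)) : Set (ℝ × ℝ) :=
  {p | p ∈ U ×ˢ U ∧ fl p.1 = fr p.2 ∧
    ∀ p' ∈ G, qflux fr p'.2 p.2 ≤ qflux fl p'.1 p.1}

/-- A maximal L1-dissipative germ. -/
def MaximalL1D (U : Set ℝ) (fl fr : ℝ → ℝ) (G : Set (ℝ × ℝ)) : Prop :=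
  IsL1D U fl fr G ∧ ∀ G', IsL1D U fl fr G' → G ⊆ G' → G' = G

/-- A definite germ: an L1D germ with a unique maximal L1D extension. -/
def Definite (U : Set ℝ) (fl fr : ℝ → ℝ) (G : Set (ℝ × ℝ)) : Prop :=
  IsL1D U fl fr G ∧ ∃! M, MaximalL1D U fl fr M ∧ G ⊆ M

/-- The strict vanishing viscosity germ. -/
def GoVV (fl fr : ℝ → ℝ) : Set (ℝ × ℝ) :=
  {p | fl p.1 = fr p.2 ∧
    (p.1 = p.2 ∨
     (p.1 < p.2 ∧ ((∀ z ∈ Set.Ioc p.1 p.2, fl p.1 < fl z) ∨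
                   (∀ z ∈ Set.Ico p.1 p.2, fl p.1 < fr z))) ∨
     (p.2 < p.1 ∧ ((∀ z ∈ Set.Ico p.2 p.1, fl z < fl p.1) ∨
                   (∀ z ∈ Set.Ioc p.2 p.1, fr z < fl p.1))))}

/-- The vanishing viscosity germ (closure form). -/
def GVV (fl fr : ℝ → ℝ) : Set (ℝ × ℝ) :=
  {p | fl p.1 = fr p.2 ∧
    (p.1 = p.2 ∨
     (p.1 < p.2 ∧ ∃ uo ∈ Set.Icc p.1 p.2,
        (∀ z ∈ Set.Icc p.1 uo, fl p.1 ≤ fl z) ∧ (∀ z ∈ Set.Icc uo p.2, fl p.1 ≤ fr z)) ∨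
     (p.2 < p.1 ∧ ∃ uo ∈ Set.Icc p.2 p.1,
        (∀ z ∈ Set.Icc p.2 uo, fr z ≤ fl p.1) ∧ (∀ z ∈ Set.Icc uo p.1, fl z ≤ fl p.1)))}

open Set

/- ================= auxiliary lemmas ================= -/

lemma myQfluxSymm (f : ℝ → ℝ) (a b : ℝ) : qflux f a b = qflux f b a := by
  unfold qflux
  have h : b - a = -(a - b) := by ring
  rw [h, Real.sign_neg]
  ring

lemma myNearLtImpLe {f : ℝ → ℝ} (hf : Continuous f) {x t : ℝ}
    (h : ∀ ε > 0, ∃ z, |z - x| < ε ∧ f z < t) : f x ≤ t := by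
  have hx : x ∈ closure {z | f z < t} := by
    rw [Metric.mem_closure_iff]
    intro ε hε
    obtain ⟨z, hz1, hz2⟩ := h ε hε
    exact ⟨z, hz2, by rwa [Real.dist_eq, abs_sub_comm]⟩
  have hcl : closure {z | f z < t} ⊆ {z | f z ≤ t} :=
    closure_minimal (fun z hz => show f z ≤ t from le_of_lt hz) (isClosed_le hf continuous_const)
  exact hcl hx

lemma myGeOnIco {f : ℝ → ℝ} (hf : Continuous f) {a b t : ℝ} (hab : a < b)
    (h : ∀ z ∈ Ico a b, t ≤ f z) : t ≤ f b := by
  have hb : b ∈ closure (Ico a b) := by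
    rw [closure_Ico hab.ne]; exact ⟨hab.le, le_refl b⟩
  exact closure_minimal h (isClosed_le continuous_const hf) hb

lemma myGeOnIoc {f : ℝ → ℝ} (hf : Continuous f) {a b t : ℝ} (hab : a < b)
    (h : ∀ z ∈ Ioc a b, t ≤ f z) : t ≤ f a := by
  have hb : a ∈ closure (Ioc a b) := by
    rw [closure_Ioc hab.ne]; exact ⟨le_refl a, hab.le⟩
  exact closure_minimal h (isClosed_le continuous_const hf) hb

lemma myExistsGtMin {f : ℝ → ℝ} (hf : Continuous f) {a b t : ℝ} (hab : a ≤ b)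
    (h1 : ∀ z ∈ Icc a b, t ≤ f z) (h2 : ∀ z ∈ Icc a b, f z ≠ t) :
    ∃ τ, t < τ ∧ ∀ z ∈ Icc a b, τ ≤ f z := by
  obtain ⟨z₀, hz₀, hmin⟩ := isCompact_Icc.exists_isMinOn
    (⟨a, left_mem_Icc.2 hab⟩ : (Icc a b).Nonempty) hf.continuousOn
  exact ⟨f z₀, lt_of_le_of_ne (h1 z₀ hz₀) (Ne.symm (h2 z₀ hz₀)),
    fun z hz => isMinOn_iff.1 hmin z hz⟩

/-- Key construction: from a crossing level `t` below `fl ul`, with `fl ≥ t` left of `c`,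
`fr ≥ t` right of `c`, both attaining `t`, produce a strict-germ pair. -/
lemma myKey {fl fr : ℝ → ℝ} (hfl : Continuous fl) (hfr : Continuous fr) {ul ur c t : ℝ}
    (hts : t < fl ul) (hRH : fl ul = fr ur)
    (h1 : ul ≤ c) (h2 : c ≤ ur)
    (hflge : ∀ z ∈ Icc ul c, t ≤ fl z) (hfrge : ∀ z ∈ Icc c ur, t ≤ fr z)
    (ha : ∃ a ∈ Icc ul c, fl a = t) (hb : ∃ b ∈ Icc c ur, fr b = t) :
    ∃ cl cr : ℝ, (cl, cr) ∈ GoVV fl fr ∧ ul < cl ∧ cr < ur ∧ fl cl < fl ul := by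
  obtain ⟨a, haI, hat⟩ := ha
  obtain ⟨b, hbI, hbt⟩ := hb
  have hRcomp : IsCompact (Icc c ur ∩ {z | fr z = t}) :=
    isCompact_Icc.inter_right (isClosed_eq hfr continuous_const)
  obtain ⟨cr, hcrR, hcrLB⟩ := hRcomp.exists_isLeast ⟨b, hbI, hbt⟩
  obtain ⟨⟨hccr, hcrur⟩, hcrt⟩ := hcrR
  have hLcomp : IsCompact (Icc ul cr ∩ {z | fl z = t}) :=
    isCompact_Icc.inter_right (isClosed_eq hfl continuous_const)
  obtain ⟨cl, hclL, hclUB⟩ := hLcomp.exists_isGreatest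
    ⟨a, ⟨haI.1, le_trans haI.2 hccr⟩, hat⟩
  obtain ⟨⟨hulcl, hclcr⟩, hclt⟩ := hclL
  have hclt' : fl cl = t := hclt
  have hcrt' : fr cr = t := hcrt
  have hcl_lt : ul < cl := by
    rcases eq_or_lt_of_le hulcl with h | h
    · exfalso; rw [← h] at hclt'; exact hts.ne' hclt'
    · exact h
  have hcr_lt : cr < ur := by
    rcases eq_or_lt_of_le hcrur with h | h
    · exfalso; rw [h] at hcrt'; rw [← hRH] at hcrt'; exact hts.ne' hcrt'
    · exact h
  have hfr_gt : ∀ z ∈ Ico c cr, t < fr z := by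
    intro z hz
    have hge := hfrge z ⟨hz.1, le_trans hz.2.le hcrur⟩
    rcases eq_or_lt_of_le hge with h | h
    · exact absurd (hcrLB ⟨⟨hz.1, le_trans hz.2.le hcrur⟩, h.symm⟩) (not_le.2 hz.2)
    · exact h
  rcases eq_or_lt_of_le hclcr with hEq | hLt
  · exact ⟨cl, cr, ⟨by rw [hclt', hcrt'], Or.inl hEq⟩, hcl_lt, hcr_lt,
      by rw [hclt']; exact hts⟩
  · by_cases hD : ∀ z ∈ Ioc cl cr, t < fl z
    · refine ⟨cl, cr, ⟨by rw [hclt', hcrt'], Or.inr (Or.inl ⟨hLt, Or.inl ?_⟩)⟩,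
        hcl_lt, hcr_lt, by rw [hclt']; exact hts⟩
      intro z hz
      rw [hclt']
      exact hD z hz
    · push_neg at hD
      obtain ⟨z, hzI, hzle⟩ := hD
      have hne : ∀ w ∈ Ioc cl cr, fl w ≠ t := by
        intro w hw hwt
        exact absurd (hclUB ⟨⟨le_trans hulcl hw.1.le, hw.2⟩, hwt⟩) (not_le.2 hw.1)
      have hzlt : fl z < t := lt_of_le_of_ne hzle (hne z hzI)
      have hall : ∀ w ∈ Ioc cl cr, fl w < t := by
        intro w hw
        rcases lt_trichotomy w z with h | h | h
        · by_contra hcon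
          have hwgt : t < fl w := lt_of_le_of_ne (not_lt.1 hcon) (Ne.symm (hne w hw))
          have hsub := intermediate_value_Icc' h.le (hfl.continuousOn (s := Icc w z))
          have htmem : t ∈ Icc (fl z) (fl w) := ⟨hzlt.le, hwgt.le⟩
          obtain ⟨ξ, hξI, hξt⟩ := hsub htmem
          exact hne ξ ⟨lt_of_lt_of_le hw.1 hξI.1, le_trans hξI.2 hzI.2⟩ hξt
        · rw [h]; exact hzlt
        · by_contra hcon
          have hwgt : t < fl w := lt_of_le_of_ne (not_lt.1 hcon) (Ne.symm (hne w hw))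
          have hsub := intermediate_value_Icc h.le (hfl.continuousOn (s := Icc z w))
          have htmem : t ∈ Icc (fl z) (fl w) := ⟨hzlt.le, hwgt.le⟩
          obtain ⟨ξ, hξI, hξt⟩ := hsub htmem
          exact hne ξ ⟨lt_of_lt_of_le hzI.1 hξI.1, le_trans hξI.2 hw.2⟩ hξt
      have hccl : c ≤ cl := by
        by_contra hcon
        push_neg at hcon
        exact absurd (hflge c ⟨h1, le_refl c⟩)
          (not_le.2 (hall c ⟨hcon, hccr⟩))
      refine ⟨cl, cr, ⟨by rw [hclt', hcrt'], Or.inr (Or.inl ⟨hLt, Or.inr ?_⟩)⟩,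
        hcl_lt, hcr_lt, by rw [hclt']; exact hts⟩
      intro w hw
      rw [hclt']
      exact hfr_gt w ⟨le_trans hccl hw.1, hw.2⟩

/-- Main lemma, forward (ul < ur) case. -/
lemma myMainForward {fl fr : ℝ → ℝ} (hfl : Continuous fl) (hfr : Continuous fr)
    {ul ur : ℝ} (hlt : ul < ur) (hRH : fl ul = fr ur) (hn : (ul, ur) ∉ GVV fl fr) :
    ∃ cl cr : ℝ, (cl, cr) ∈ GoVV fl fr ∧ ul < cl ∧ cr < ur ∧ fl cl < fl ul := by
  -- Step D: produce dips x < y with fl x < s, fr y < s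
  have hD : ∃ x y, ul ≤ x ∧ x < y ∧ y ≤ ur ∧ fl x < fl ul ∧ fr y < fl ul := by
    by_contra hcon
    push_neg at hcon
    apply hn
    set K : Set ℝ := {c' | c' ∈ Icc ul ur ∧ ∀ w ∈ Icc ul c', fl ul ≤ fl w} with hK
    have hulK : ul ∈ K := by
      refine ⟨left_mem_Icc.2 hlt.le, fun w hw => ?_⟩
      have : w = ul := le_antisymm hw.2 hw.1
      rw [this]
    have hKbdd : BddAbove K := ⟨ur, fun c hc => hc.1.2⟩
    set uo := sSup K with huo
    have h_uo1 : ul ≤ uo := le_csSup hKbdd hulK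
    have h_uo2 : uo ≤ ur := csSup_le ⟨ul, hulK⟩ (fun c hc => hc.1.2)
    have hIco : ∀ w ∈ Ico ul uo, fl ul ≤ fl w := by
      intro w hw
      obtain ⟨d, hdK, hwd⟩ := exists_lt_of_lt_csSup ⟨ul, hulK⟩ hw.2
      exact hdK.2 w ⟨hw.1, hwd.le⟩
    have hflpart : ∀ w ∈ Icc ul uo, fl ul ≤ fl w := by
      intro w hw
      rcases lt_or_eq_of_le hw.2 with h | h
      · exact hIco w ⟨hw.1, h⟩
      · rcases eq_or_lt_of_le h_uo1 with h2 | h2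
        · rw [h, ← h2]
        · rw [h]; exact myGeOnIco hfl h2 hIco
    have hfrIoc : ∀ y ∈ Ioc uo ur, fl ul ≤ fr y := by
      intro y hy
      have hynotK : ¬∀ w ∈ Icc ul y, fl ul ≤ fl w := by
        intro hh
        exact absurd (le_csSup hKbdd ⟨⟨le_trans h_uo1 hy.1.le, hy.2⟩, hh⟩)
          (not_le.2 hy.1)
      push_neg at hynotK
      obtain ⟨w, hwI, hwlt⟩ := hynotK
      have hw_uo : uo < w := by
        by_contra hc
        push_neg at hc
        exact absurd (hflpart w ⟨hwI.1, hc⟩) (not_le.2 hwlt)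
      rcases lt_or_eq_of_le hwI.2 with hwy | hwy
      · exact hcon w y (le_trans h_uo1 hw_uo.le) hwy hy.2 hwlt
      · obtain ⟨ε, hε, hball⟩ := Metric.isOpen_iff.1
          (isOpen_lt hfl continuous_const : IsOpen {z | fl z < fl ul}) w hwlt
        set x := max (w - ε/2) ((uo + w)/2) with hx
        have hx1 : x < w := max_lt (by linarith) (by linarith)
        have hx2 : uo < x := lt_of_lt_of_le (by linarith : uo < (uo+w)/2) (le_max_right _ _)
        have hxball : x ∈ Metric.ball w ε := by
          rw [Metric.mem_ball, Real.dist_eq, abs_of_nonpos (by linarith)]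
          have h3 := le_max_left (w - ε/2) ((uo+w)/2)
          linarith
        have hxw : fl x < fl ul := hball hxball
        exact hcon x y (le_trans h_uo1 hx2.le) (by rw [← hwy]; exact hx1) hy.2 hxw
    have hfrpart : ∀ z ∈ Icc uo ur, fl ul ≤ fr z := by
      intro z hz
      rcases eq_or_lt_of_le hz.1 with h | h
      · rcases eq_or_lt_of_le h_uo2 with h2 | h2
        · rw [← h, h2, ← hRH]
        · rw [← h]; exact myGeOnIoc hfr h2 hfrIoc
      · exact hfrIoc z ⟨h, hz.2⟩
    exact ⟨hRH, Or.inr (Or.inl ⟨hlt, uo, ⟨h_uo1, h_uo2⟩, hflpart, hfrpart⟩)⟩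
  obtain ⟨x, y, hx, hxy, hyur, hflx, hfry⟩ := hD
  -- admissible levels
  set A : Set ℝ := {τ | ∃ c ∈ Icc ul ur,
      (∀ z ∈ Icc ul c, τ ≤ fl z) ∧ (∀ z ∈ Icc c ur, τ ≤ fr z)} with hA
  have hub : ∀ τ ∈ A, τ ≤ max (fl x) (fr y) := by
    intro τ hτ
    obtain ⟨c, hc, H1, H2⟩ := hτ
    rcases le_or_gt x c with h | h
    · exact le_trans (H1 x ⟨hx, h⟩) (le_max_left _ _)
    · exact le_trans (H2 y ⟨le_of_lt (lt_trans h hxy), hyur⟩) (le_max_right _ _)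
  have hAbdd : BddAbove A := ⟨max (fl x) (fr y), hub⟩
  have hAne : A.Nonempty := by
    obtain ⟨z₁, hz₁, hmin⟩ := isCompact_Icc.exists_isMinOn
      (⟨ul, left_mem_Icc.2 hlt.le⟩ : (Icc ul ur).Nonempty) hfr.continuousOn
    refine ⟨min (fl ul) (fr z₁), ul, left_mem_Icc.2 hlt.le, fun z hz => ?_, fun z hz => ?_⟩
    · have : z = ul := le_antisymm hz.2 hz.1
      rw [this]; exact min_le_left _ _
    · exact le_trans (min_le_right _ _) (isMinOn_iff.1 hmin z hz)
  set t := sSup A with htdef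
  have ht_lt : t < fl ul :=
    lt_of_le_of_lt (csSup_le hAne hub) (max_lt hflx hfry)
  have hAle : ∀ τ ∈ A, τ ≤ t := fun τ hτ => le_csSup hAbdd hτ
  have hAgt : ∀ b, b < t → ∃ a ∈ A, b < a := fun b hb => exists_lt_of_lt_csSup hAne hb
  -- contradiction maker
  have mkA : ∀ c ∈ Icc ul ur, (∀ z ∈ Icc ul c, t ≤ fl z) → (∀ z ∈ Icc ul c, fl z ≠ t) →
      (∀ z ∈ Icc c ur, t ≤ fr z) → (∀ z ∈ Icc c ur, fr z ≠ t) → False := by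
    intro c hc hge1 hne1 hge2 hne2
    obtain ⟨τ1, hτ1, hτ1le⟩ := myExistsGtMin hfl hc.1 hge1 hne1
    obtain ⟨τ2, hτ2, hτ2le⟩ := myExistsGtMin hfr hc.2 hge2 hne2
    have hmem : min τ1 τ2 ∈ A :=
      ⟨c, hc, fun z hz => le_trans (min_le_left _ _) (hτ1le z hz),
        fun z hz => le_trans (min_le_right _ _) (hτ2le z hz)⟩
    exact absurd (hAle _ hmem) (not_le.2 (lt_min hτ1 hτ2))
  -- cstar
  set Kst : Set ℝ := {c' | c' ∈ Icc ul ur ∧ ∀ z ∈ Icc ul c', t ≤ fl z} with hKst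
  have hulKst : ul ∈ Kst := by
    refine ⟨left_mem_Icc.2 hlt.le, fun z hz => ?_⟩
    have : z = ul := le_antisymm hz.2 hz.1
    rw [this]; exact ht_lt.le
  have hKstbdd : BddAbove Kst := ⟨ur, fun c hc => hc.1.2⟩
  set cstar := sSup Kst with hcstardef
  have hcstar_ub : ∀ d ∈ Kst, d ≤ cstar := fun d hd => le_csSup hKstbdd hd
  have hul_cstar : ul ≤ cstar := hcstar_ub ul hulKst
  have hcstar_ur : cstar ≤ ur := csSup_le ⟨ul, hulKst⟩ (fun c hc => hc.1.2)
  have hIcoSt : ∀ w ∈ Ico ul cstar, t ≤ fl w := by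
    intro w hw
    obtain ⟨d, hdK, hwd⟩ := exists_lt_of_lt_csSup ⟨ul, hulKst⟩ hw.2
    exact hdK.2 w ⟨hw.1, hwd.le⟩
  have hcstarP : ∀ z ∈ Icc ul cstar, t ≤ fl z := by
    intro z hz
    rcases lt_or_eq_of_le hz.2 with h | h
    · exact hIcoSt z ⟨hz.1, h⟩
    · rcases eq_or_lt_of_le hul_cstar with h2 | h2
      · rw [h, ← h2]; exact ht_lt.le
      · rw [h]; exact myGeOnIco hfl h2 hIcoSt
  -- Claim*: fr ≥ t on [cstar, ur]
  have ClaimStar : ∀ w ∈ Icc cstar ur, t ≤ fr w := by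
    by_contra hcon
    push_neg at hcon
    obtain ⟨w, hw, hfw⟩ := hcon
    have stepA : ∀ w' ∈ Icc cstar ur, fr w' < t → ∀ z ∈ Icc ul w', t ≤ fl z := by
      intro w' hw' hfw' z hz
      by_contra hc2
      push_neg at hc2
      obtain ⟨τ, hτA, hτgt⟩ := hAgt (max (fr w') (fl z)) (max_lt hfw' hc2)
      obtain ⟨c₀, hc₀, H1, H2⟩ := hτA
      rcases le_or_gt c₀ w' with h | h
      · have := H2 w' ⟨h, hw'.2⟩
        have h3 := le_max_left (fr w') (fl z)
        linarith
      · have := H1 z ⟨hz.1, le_trans hz.2 h.le⟩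
        have h3 := le_max_right (fr w') (fl z)
        linarith
    have hwK : w ∈ Kst := ⟨⟨le_trans hul_cstar hw.1, hw.2⟩, stepA w hw hfw⟩
    have hwcs : w = cstar := le_antisymm (hcstar_ub w hwK) hw.1
    rw [hwcs] at hfw
    have hcs_ur : cstar < ur := by
      rcases eq_or_lt_of_le hcstar_ur with h | h
      · exfalso; rw [h, ← hRH] at hfw; linarith
      · exact h
    set τb := (fr cstar + t)/2 with hτb
    have hτb1 : fr cstar < τb := by rw [hτb]; linarith
    have hτb2 : τb < t := by rw [hτb]; linarith
    obtain ⟨ε, hε, hball⟩ := Metric.isOpen_iff.1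
      (isOpen_lt hfr continuous_const : IsOpen {z | fr z < τb}) cstar hτb1
    set d := min (cstar + ε/2) ur with hd
    have hcd : cstar < d := lt_min (by linarith) hcs_ur
    have hdK : d ∈ Kst := by
      refine ⟨⟨le_trans hul_cstar hcd.le, min_le_right _ _⟩, ?_⟩
      intro z hz
      by_contra hc2
      push_neg at hc2
      obtain ⟨τ, hτA, hτgt⟩ := hAgt (max τb (fl z)) (max_lt hτb2 hc2)
      obtain ⟨c₀, hc₀, H1, H2⟩ := hτA
      rcases le_or_gt c₀ d with h | h
      · set m := max c₀ cstar with hm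
        have hm1 : m ∈ Icc c₀ ur := ⟨le_max_left _ _, max_le hc₀.2 hcstar_ur⟩
        have hmball : m ∈ Metric.ball cstar ε := by
          rw [Metric.mem_ball, Real.dist_eq,
            abs_of_nonneg (sub_nonneg.2 (le_max_right _ _))]
          have hm2 : m ≤ cstar + ε/2 :=
            max_le (le_trans h (min_le_left _ _)) (by linarith)
          linarith
        have hm3 : fr m < τb := hball hmball
        have hm4 := H2 m hm1
        have h5 := le_max_left τb (fl z)
        linarith
      · have := H1 z ⟨hz.1, le_trans hz.2 h.le⟩
        have h5 := le_max_right τb (fl z)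
        linarith
    exact absurd (hcstar_ub d hdK) (not_le.2 hcd)
  -- cstst
  set Kss : Set ℝ := {c' | c' ∈ Icc ul ur ∧ ∀ z ∈ Icc c' ur, t ≤ fr z} with hKss
  have hurKss : ur ∈ Kss := by
    refine ⟨right_mem_Icc.2 hlt.le, fun z hz => ?_⟩
    have : z = ur := le_antisymm hz.2 hz.1
    rw [this, ← hRH]; exact ht_lt.le
  have hcsKss : cstar ∈ Kss := ⟨⟨hul_cstar, hcstar_ur⟩, ClaimStar⟩
  have hKssbdd : BddBelow Kss := ⟨ul, fun c hc => hc.1.1⟩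
  set cstst := sInf Kss with hcsstdef
  have hcs2_lb : ∀ d ∈ Kss, cstst ≤ d := fun d hd => csInf_le hKssbdd hd
  have hcstst_le : cstst ≤ cstar := hcs2_lb _ hcsKss
  have hul_cstst : ul ≤ cstst := le_csInf ⟨ur, hurKss⟩ (fun c hc => hc.1.1)
  have hcstst_ur : cstst ≤ ur := hcs2_lb _ hurKss
  have hIocSs : ∀ w ∈ Ioc cstst ur, t ≤ fr w := by
    intro w hw
    obtain ⟨d, hdK, hdw⟩ := exists_lt_of_csInf_lt ⟨ur, hurKss⟩ hw.1
    exact hdK.2 w ⟨hdw.le, hw.2⟩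
  have hcsstP : ∀ z ∈ Icc cstst ur, t ≤ fr z := by
    intro z hz
    rcases lt_or_eq_of_le hz.1 with h | h
    · exact hIocSs z ⟨h, hz.2⟩
    · rcases eq_or_lt_of_le hcstst_ur with h2 | h2
      · rw [← h, h2, ← hRH]; exact ht_lt.le
      · rw [← h]; exact myGeOnIoc hfr h2 hIocSs
  -- P and Q
  set Pset : Set ℝ := Icc ul cstar ∩ {z | fl z = t} with hPset
  set Qset : Set ℝ := Icc cstst ur ∩ {z | fr z = t} with hQset
  have hPcomp : IsCompact Pset :=
    isCompact_Icc.inter_right (isClosed_eq hfl continuous_const)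
  have hQcomp : IsCompact Qset :=
    isCompact_Icc.inter_right (isClosed_eq hfr continuous_const)
  have hQgt : Qset = ∅ → ∀ z ∈ Icc cstst ur, t < fr z := by
    intro hQ z hz
    refine lt_of_le_of_ne (hcsstP z hz) fun h => ?_
    have : z ∈ Qset := ⟨hz, h.symm⟩
    rw [hQ] at this
    exact absurd this (notMem_empty z)
  have hQul : Qset = ∅ → ul = cstst := by
    intro hQ
    rcases eq_or_lt_of_le hul_cstst with h | h
    · exact h
    · exfalso
      have hle : fr cstst ≤ t := by
        apply myNearLtImpLe hfr
        intro ε hε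
        set d := max (cstst - ε/2) ul with hd
        have hd_lt : d < cstst := max_lt (by linarith) h
        have hdnot : d ∉ Kss := fun hdK => absurd (hcs2_lb d hdK) (not_le.2 hd_lt)
        have hnall : ¬∀ z ∈ Icc d ur, t ≤ fr z := fun hh =>
          hdnot ⟨⟨le_max_right _ _, le_trans hd_lt.le hcstst_ur⟩, hh⟩
        push_neg at hnall
        obtain ⟨z, hz, hzlt⟩ := hnall
        have hz_lt : z < cstst := by
          by_contra hc2
          push_neg at hc2
          exact absurd (hcsstP z ⟨hc2, hz.2⟩) (not_le.2 hzlt)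
        refine ⟨z, ?_, hzlt⟩
        rw [abs_of_nonpos (by linarith)]
        have h6 : cstst - ε/2 ≤ d := le_max_left _ _
        have h7 : d ≤ z := hz.1
        linarith
      exact absurd hle (not_le.2 (hQgt hQ cstst ⟨le_refl _, hcstst_ur⟩))
  -- Claim 1 : Pset nonempty
  have Claim1 : Pset.Nonempty := by
    by_contra hP
    rw [Set.not_nonempty_iff_eq_empty] at hP
    have hPgt : ∀ z ∈ Icc ul cstar, t < fl z := by
      intro z hz
      refine lt_of_le_of_ne (hcstarP z hz) fun h => ?_
      have : z ∈ Pset := ⟨hz, h.symm⟩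
      rw [hP] at this
      exact absurd this (notMem_empty z)
    rcases eq_or_lt_of_le hcstar_ur with hEq | hLt2
    · rcases Qset.eq_empty_or_nonempty with hQ | hQne
      · have hUL := hQul hQ
        apply mkA ur (right_mem_Icc.2 hlt.le)
        · intro z hz
          exact (hPgt z ⟨hz.1, by rw [hEq]; exact hz.2⟩).le
        · intro z hz
          exact (hPgt z ⟨hz.1, by rw [hEq]; exact hz.2⟩).ne'
        · intro z hz
          have : z = ur := le_antisymm hz.2 hz.1
          rw [this, ← hRH]; exact ht_lt.le
        · intro z hz
          have : z = ur := le_antisymm hz.2 hz.1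
          rw [this, ← hRH]; exact ht_lt.ne'
      · obtain ⟨zbar, hzbarQ, hzbarUB⟩ := hQcomp.exists_isGreatest hQne
        have hzbt : fr zbar = t := hzbarQ.2
        have hzbar_ur : zbar < ur := by
          rcases eq_or_lt_of_le hzbarQ.1.2 with h | h
          · exfalso; rw [h, ← hRH] at hzbt; exact ht_lt.ne' hzbt
          · exact h
        set c := (zbar + ur)/2 with hc
        have hc1 : zbar < c := by rw [hc]; linarith
        have hc2 : c < ur := by rw [hc]; linarith
        apply mkA c ⟨le_trans (le_trans hul_cstst hzbarQ.1.1) hc1.le, hc2.le⟩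
        · intro z hz
          exact (hPgt z ⟨hz.1, by rw [hEq]; exact le_trans hz.2 hc2.le⟩).le
        · intro z hz
          exact (hPgt z ⟨hz.1, by rw [hEq]; exact le_trans hz.2 hc2.le⟩).ne'
        · intro z hz
          exact hcsstP z ⟨le_trans hzbarQ.1.1 (le_trans hc1.le hz.1), hz.2⟩
        · intro z hz hzt
          have hzQ : z ∈ Qset :=
            ⟨⟨le_trans hzbarQ.1.1 (le_trans hc1.le hz.1), hz.2⟩, hzt⟩
          exact absurd (hzbarUB hzQ) (not_le.2 (lt_of_lt_of_le hc1 hz.1))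
    · have hle : fl cstar ≤ t := by
        apply myNearLtImpLe hfl
        intro ε hε
        set d := min (cstar + ε/2) ur with hd
        have hcd : cstar < d := lt_min (by linarith) hLt2
        have hdnot : d ∉ Kst := fun hdK => absurd (hcstar_ub d hdK) (not_le.2 hcd)
        have hnall : ¬∀ z ∈ Icc ul d, t ≤ fl z := fun hh =>
          hdnot ⟨⟨le_trans hul_cstar hcd.le, min_le_right _ _⟩, hh⟩
        push_neg at hnall
        obtain ⟨z, hz, hzlt⟩ := hnall
        have hz_gt : cstar < z := by
          by_contra hc2
          push_neg at hc2
          exact absurd (hcstarP z ⟨hz.1, hc2⟩) (not_le.2 hzlt)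
        refine ⟨z, ?_, hzlt⟩
        rw [abs_of_nonneg (by linarith)]
        have h6 : z ≤ cstar + ε/2 := le_trans hz.2 (min_le_left _ _)
        linarith
      exact absurd hle (not_le.2 (hPgt cstar ⟨hul_cstar, le_refl _⟩))
  obtain ⟨abar, habar_mem, habar_lb⟩ := hPcomp.exists_isLeast Claim1
  have habar_t : fl abar = t := habar_mem.2
  have habar_I : abar ∈ Icc ul cstar := habar_mem.1
  -- Claim 2 : Qset nonempty
  have Claim2 : Qset.Nonempty := by
    rcases Qset.eq_empty_or_nonempty with hQ | h
    swap
    · exact h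
    exfalso
    have hUL := hQul hQ
    have habar_ul : ul < abar := by
      rcases eq_or_lt_of_le habar_I.1 with h2 | h2
      · exfalso; rw [← h2] at habar_t; exact ht_lt.ne' habar_t
      · exact h2
    set c := (ul + abar)/2 with hc
    have hc1 : ul < c := by rw [hc]; linarith
    have hc2 : c < abar := by rw [hc]; linarith
    apply mkA c ⟨hc1.le, le_trans hc2.le (le_trans habar_I.2 hcstar_ur)⟩
    · intro z hz
      exact hcstarP z ⟨hz.1, le_trans hz.2 (le_trans hc2.le habar_I.2)⟩
    · intro z hz hzt
      have hzP : z ∈ Pset := ⟨⟨hz.1, le_trans hz.2 (le_trans hc2.le habar_I.2)⟩, hzt⟩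
      exact absurd (habar_lb hzP) (not_le.2 (lt_of_le_of_lt hz.2 hc2))
    · intro z hz
      exact hcsstP z ⟨by rw [← hUL]; exact le_trans hc1.le hz.1, hz.2⟩
    · intro z hz hzt
      have hzQ : z ∈ Qset := ⟨⟨by rw [← hUL]; exact le_trans hc1.le hz.1, hz.2⟩, hzt⟩
      rw [hQ] at hzQ
      exact absurd hzQ (notMem_empty z)
  obtain ⟨bbar, hbbar_mem, hbbar_ub⟩ := hQcomp.exists_isGreatest Claim2
  have hbbar_t : fr bbar = t := hbbar_mem.2
  have hbbar_I : bbar ∈ Icc cstst ur := hbbar_mem.1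
  -- Claim 3 : conclude
  rcases le_or_gt abar bbar with hab | hab
  · set c := min cstar bbar with hc
    apply myKey hfl hfr ht_lt hRH
      (le_min hul_cstar (le_trans habar_I.1 hab))
      (le_trans (min_le_left _ _) hcstar_ur)
    · intro z hz
      exact hcstarP z ⟨hz.1, le_trans hz.2 (min_le_left _ _)⟩
    · intro z hz
      exact hcsstP z ⟨le_trans (le_min hcstst_le hbbar_I.1) hz.1, hz.2⟩
    · exact ⟨abar, ⟨habar_I.1, le_min habar_I.2 hab⟩, habar_t⟩
    · exact ⟨bbar, ⟨min_le_right _ _, hbbar_I.2⟩, hbbar_t⟩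
  · exfalso
    set c := (bbar + abar)/2 with hc
    have hc1 : bbar < c := by rw [hc]; linarith
    have hc2 : c < abar := by rw [hc]; linarith
    apply mkA c ⟨le_trans (le_trans hul_cstst hbbar_I.1) hc1.le,
      le_trans hc2.le (le_trans habar_I.2 hcstar_ur)⟩
    · intro z hz
      exact hcstarP z ⟨hz.1, le_trans hz.2 (le_trans hc2.le habar_I.2)⟩
    · intro z hz hzt
      have hzP : z ∈ Pset := ⟨⟨hz.1, le_trans hz.2 (le_trans hc2.le habar_I.2)⟩, hzt⟩
      exact absurd (habar_lb hzP) (not_le.2 (lt_of_le_of_lt hz.2 hc2))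
    · intro z hz
      exact hcsstP z ⟨le_trans hbbar_I.1 (le_trans hc1.le hz.1), hz.2⟩
    · intro z hz hzt
      have hzQ : z ∈ Qset := ⟨⟨le_trans hbbar_I.1 (le_trans hc1.le hz.1), hz.2⟩, hzt⟩
      exact absurd (hbbar_ub hzQ) (not_le.2 (lt_of_lt_of_le hc1 hz.1))

/-- Transporting strict-germ membership through the reflection `z ↦ -z`, `f ↦ -f`. -/
lemma myTGoVV {fl fr : ℝ → ℝ} {p q : ℝ}
    (h : (p, q) ∈ GoVV (fun z => -fl (-z)) (fun z => -fr (-z))) :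
    ((-p, -q) : ℝ × ℝ) ∈ GoVV fl fr := by
  simp only [GoVV, Set.mem_setOf_eq] at h ⊢
  obtain ⟨h1, h2⟩ := h
  constructor
  · have h1' : -fl (-p) = -fr (-q) := h1
    linarith
  · rcases h2 with h2 | ⟨hpq, h3⟩ | ⟨hqp, h3⟩
    · exact Or.inl (by rw [h2])
    · refine Or.inr (Or.inr ⟨neg_lt_neg hpq, ?_⟩)
      rcases h3 with h3 | h3
      · left
        intro z hz
        have hz' : -z ∈ Ioc p q := ⟨by linarith [hz.2], by linarith [hz.1]⟩
        have h4 : -fl (-p) < -fl (-(-z)) := h3 (-z) hz'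
        rw [neg_neg] at h4
        linarith
      · right
        intro z hz
        have hz' : -z ∈ Ico p q := ⟨by linarith [hz.2], by linarith [hz.1]⟩
        have h4 : -fl (-p) < -fr (-(-z)) := h3 (-z) hz'
        rw [neg_neg] at h4
        linarith
    · refine Or.inr (Or.inl ⟨neg_lt_neg hqp, ?_⟩)
      rcases h3 with h3 | h3
      · left
        intro z hz
        have hz' : -z ∈ Ico q p := ⟨by linarith [hz.2], by linarith [hz.1]⟩
        have h4 : -fl (-(-z)) < -fl (-p) := h3 (-z) hz'
        rw [neg_neg] at h4
        linarith
      · right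
        intro z hz
        have hz' : -z ∈ Ioc q p := ⟨by linarith [hz.2], by linarith [hz.1]⟩
        have h4 : -fr (-(-z)) < -fl (-p) := h3 (-z) hz'
        rw [neg_neg] at h4
        linarith

/-- Transporting GVV membership through the reflection. -/
lemma myTGVV {fl fr : ℝ → ℝ} {ul ur : ℝ}
    (h : ((-ul, -ur) : ℝ × ℝ) ∈ GVV (fun z => -fl (-z)) (fun z => -fr (-z))) :
    (ul, ur) ∈ GVV fl fr := by
  simp only [GVV, Set.mem_setOf_eq] at h ⊢
  obtain ⟨h1, h2⟩ := h
  constructor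
  · have h1' : -fl (-(-ul)) = -fr (-(-ur)) := h1
    rw [neg_neg, neg_neg] at h1'
    linarith
  · rcases h2 with h2 | ⟨hpq, uo, huo, ha, hb⟩ | ⟨hqp, uo, huo, ha, hb⟩
    · exact Or.inl (by linarith [h2])
    · refine Or.inr (Or.inr ⟨by linarith [hpq], -uo, ⟨by linarith [huo.2], by linarith [huo.1]⟩, ?_, ?_⟩)
      · intro z hz
        have h4 : -fl (-(-ul)) ≤ -fr (-(-z)) := hb (-z) ⟨by linarith [hz.2], by linarith [hz.1]⟩
        rw [neg_neg, neg_neg] at h4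
        linarith
      · intro z hz
        have h4 : -fl (-(-ul)) ≤ -fl (-(-z)) := ha (-z) ⟨by linarith [hz.2], by linarith [hz.1]⟩
        rw [neg_neg, neg_neg] at h4
        linarith
    · refine Or.inr (Or.inl ⟨by linarith [hqp], -uo, ⟨by linarith [huo.2], by linarith [huo.1]⟩, ?_, ?_⟩)
      · intro z hz
        have h4 : -fl (-(-z)) ≤ -fl (-(-ul)) := hb (-z) ⟨by linarith [hz.2], by linarith [hz.1]⟩
        rw [neg_neg, neg_neg] at h4
        linarith
      · intro z hz
        have h4 : -fr (-(-z)) ≤ -fl (-(-ul)) := ha (-z) ⟨by linarith [hz.2], by linarith [hz.1]⟩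
        rw [neg_neg, neg_neg] at h4
        linarith

theorem GVV_contains_dual_GoVV
    (fl fr : ℝ → ℝ) (hfl : Continuous fl) (hfr : Continuous fr) :
    (∀ ul ur : ℝ, fl ul = fr ur → (ul, ur) ∉ GVV fl fr →
      ∃ cl cr : ℝ, (cl, cr) ∈ GoVV fl fr ∧ qflux fl ul cl < qflux fr ur cr) ∧
    dualGerm Set.univ fl fr (GoVV fl fr) ⊆ GVV fl fr := by
  have main : ∀ ul ur : ℝ, fl ul = fr ur → (ul, ur) ∉ GVV fl fr →
      ∃ cl cr : ℝ, (cl, cr) ∈ GoVV fl fr ∧ qflux fl ul cl < qflux fr ur cr := by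
    intro ul ur hRH hn
    rcases lt_trichotomy ul ur with hlt | heq | hgt
    · obtain ⟨cl, cr, hmem, h1, h2, h3⟩ := myMainForward hfl hfr hlt hRH hn
      refine ⟨cl, cr, hmem, ?_⟩
      have hval : fl cl = fr cr := hmem.1
      unfold qflux
      rw [Real.sign_of_neg (by linarith : ul - cl < 0),
        Real.sign_of_pos (by linarith : (0:ℝ) < ur - cr), ← hRH, ← hval]
      nlinarith
    · exact absurd (⟨hRH, Or.inl heq⟩ : (ul, ur) ∈ GVV fl fr) hn
    · have hglc : Continuous (fun z => -fl (-z)) := (hfl.comp continuous_neg).neg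
      have hgrc : Continuous (fun z => -fr (-z)) := (hfr.comp continuous_neg).neg
      have hRH' : (fun z => -fl (-z)) (-ul) = (fun z => -fr (-z)) (-ur) := by
        simp only [neg_neg]
        linarith
      have hn' : ((-ul, -ur) : ℝ × ℝ) ∉ GVV (fun z => -fl (-z)) (fun z => -fr (-z)) :=
        fun h => hn (myTGVV h)
      obtain ⟨cl', cr', hmem', h1', h2', h3'⟩ :=
        myMainForward hglc hgrc (neg_lt_neg hgt) hRH' hn'
      have hmem2 := myTGoVV hmem'
      refine ⟨-cl', -cr', hmem2, ?_⟩
      have hval : fl (-cl') = fr (-cr') := hmem2.1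
      have h3'' : fl ul < fl (-cl') := by
        have h5 : -fl (-cl') < -fl (-(-ul)) := h3'
        rw [neg_neg] at h5
        linarith
      unfold qflux
      rw [Real.sign_of_pos (by linarith : (0:ℝ) < ul - -cl'),
        Real.sign_of_neg (by linarith : ur - -cr' < 0), ← hRH, ← hval]
      nlinarith
  refine ⟨main, ?_⟩
  intro p hp
  obtain ⟨-, hRH, hq⟩ := hp
  by_contra hn
  have hn' : (p.1, p.2) ∉ GVV fl fr := by
    rw [Prod.mk.eta]
    exact hn
  obtain ⟨cl, cr, hmem, hltq⟩ := main p.1 p.2 hRH hn'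
  have hq2 := hq (cl, cr) hmem
  have e1 := myQfluxSymm fl p.1 cl
  have e2 := myQfluxSymm fr p.2 cr
  simp only at hq2
  linarith

end
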